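/- arXiv:1702.04071 — 2 statements merged into one kernel-verified Lean document; each statement's English description precedes it below -/
import Mathlib

section
/- Let R be the two-sided ideal of B(Z_2) generated by the images of the arrows ρ_1,…,ρ_7. Then R^8 = 0 but R^7 ≠ 0; in particular B(Z_2) is a finite-dimensional algebra whose arrow ideal is nilpotent of nilpotency index exactly 8. -/
open FreeAlgebra

/-- Generators of the path algebra `B(Z_2)`: four vertex idempotents and seven arrows. -/
inductive Gen2 : Type
  | e : Fin 4 → Gen2
  | r : Fin 7 → Gen2

/-- Sources of the arrows ρ₁,…,ρ₇. -/
def src2 : Fin 7 → Fin 4 := ![0, 1, 0, 1, 2, 3, 2]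

/-- Targets of the arrows ρ₁,…,ρ₇. -/
def tgt2 : Fin 7 → Fin 4 := ![1, 0, 1, 2, 3, 2, 3]

/-- Relations presenting `B(Z_2)` as a quotient of the free algebra: the path-algebra
relations for the quiver together with ρ₁ρ₄ = ρ₄ρ₇ = ρ₂ρ₁ = ρ₃ρ₂ = ρ₆ρ₅ = ρ₇ρ₆ = 0. -/
inductive Rel2 : FreeAlgebra (ZMod 2) Gen2 → FreeAlgebra (ZMod 2) Gen2 → Prop
  | idem (k : Fin 4) :
      Rel2 (ι (ZMod 2) (Gen2.e k) * ι (ZMod 2) (Gen2.e k)) (ι (ZMod 2) (Gen2.e k))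
  | orth (k l : Fin 4) (h : k ≠ l) : Rel2 (ι (ZMod 2) (Gen2.e k) * ι (ZMod 2) (Gen2.e l)) 0
  | sum : Rel2 (∑ k : Fin 4, ι (ZMod 2) (Gen2.e k)) 1
  | source (m : Fin 7) :
      Rel2 (ι (ZMod 2) (Gen2.e (src2 m)) * ι (ZMod 2) (Gen2.r m)) (ι (ZMod 2) (Gen2.r m))
  | target (m : Fin 7) :
      Rel2 (ι (ZMod 2) (Gen2.r m) * ι (ZMod 2) (Gen2.e (tgt2 m))) (ι (ZMod 2) (Gen2.r m))
  | rel14 : Rel2 (ι (ZMod 2) (Gen2.r 0) * ι (ZMod 2) (Gen2.r 3)) 0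
  | rel47 : Rel2 (ι (ZMod 2) (Gen2.r 3) * ι (ZMod 2) (Gen2.r 6)) 0
  | rel21 : Rel2 (ι (ZMod 2) (Gen2.r 1) * ι (ZMod 2) (Gen2.r 0)) 0
  | rel32 : Rel2 (ι (ZMod 2) (Gen2.r 2) * ι (ZMod 2) (Gen2.r 1)) 0
  | rel65 : Rel2 (ι (ZMod 2) (Gen2.r 5) * ι (ZMod 2) (Gen2.r 4)) 0
  | rel76 : Rel2 (ι (ZMod 2) (Gen2.r 6) * ι (ZMod 2) (Gen2.r 5)) 0

/-- The genus-2 bordered algebra `B(Z_2)`. -/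
abbrev B2 : Type := RingQuot Rel2

/-- The idempotents i₀, i₁, i₂, i₃ in `B(Z_2)`. -/
noncomputable def idem2 (k : Fin 4) : B2 :=
  RingQuot.mkAlgHom (ZMod 2) Rel2 (ι (ZMod 2) (Gen2.e k))

/-- The arrows ρ₁,…,ρ₇ in `B(Z_2)` (indexed by `Fin 7`). -/
noncomputable def arr2 (m : Fin 7) : B2 :=
  RingQuot.mkAlgHom (ZMod 2) Rel2 (ι (ZMod 2) (Gen2.r m))

/-- The arrow ρ_k in `B(Z_2)`, using 1-based indexing; `0` for out-of-range indices. -/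
noncomputable def ρ2 (k : ℕ) : B2 :=
  if h : 1 ≤ k ∧ k ≤ 7 then arr2 ⟨k - 1, by omega⟩ else 0

/-- The chord ρ_{[i,j]} = ρ_i ρ_{i+1} ⋯ ρ_j in `B(Z_2)` (1-based indices). -/
noncomputable def chord2 (i j : ℕ) : B2 :=
  ((List.range' i (j + 1 - i)).map ρ2).prod

/-! In `B(Z_2)` every product `ρ_a ρ_b` with `b ≠ a + 1` vanishes, by a vertex mismatch or by
one of the six relations. Hence the only nonzero paths are the runs `ρ_i ρ_{i+1} ⋯ ρ_{i+n-1}`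
inside `ρ_1, …, ρ_7`, so `n ≤ 7`. The idempotents and these runs span `B(Z_2)`; the runs of
length `≥ n` span a two-sided ideal `P n` with `P m * P n ≤ P (m + n)`. The arrow ideal lies in
`P 1`, so its products of eight elements lie in `P 8 = 0`. Finally `ρ_1 ⋯ ρ_7` acts nontrivially
on an 8-dimensional uniserial module, so it is nonzero. -/

section PathProd

variable {R A : Type*} [CommSemiring R] [Semiring A] [Algebra R A] (ρ : ℕ → A)

def pathProd (i n : ℕ) : A :=
  ((List.range' i n).map ρ).prod

@[simp]
lemma pathProd_zero (i : ℕ) : pathProd ρ i 0 = 1 := rfl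

lemma pathProd_add (i m n : ℕ) :
    pathProd ρ i (m + n) = pathProd ρ i m * pathProd ρ (i + m) n := by
  simp only [pathProd, ← List.range'_append, one_mul, List.map_append, List.prod_append]

lemma pathProd_one (i : ℕ) : pathProd ρ i 1 = ρ i := by
  simp [pathProd]

lemma pathProd_succ (i n : ℕ) : pathProd ρ i (n + 1) = ρ i * pathProd ρ (i + 1) n := by
  rw [add_comm, pathProd_add, pathProd_one]

lemma pathProd_succ' (i n : ℕ) : pathProd ρ i (n + 1) = pathProd ρ i n * ρ (i + n) := by
  rw [pathProd_add, pathProd_one]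

variable {ρ}

lemma pathProd_eq_zero {i n k : ℕ} (hk : ρ k = 0) (hik : i ≤ k) (hkn : k < i + n) :
    pathProd ρ i n = 0 :=
  List.prod_eq_zero (hk ▸ List.mem_map_of_mem (List.mem_range'_1.mpr ⟨hik, hkn⟩))

lemma pathProd_mul_pathProd_of_ne (hρ : ∀ a b, b ≠ a + 1 → ρ a * ρ b = 0) {i m k n : ℕ}
    (hm : m ≠ 0) (hn : n ≠ 0) (hk : k ≠ i + m) : pathProd ρ i m * pathProd ρ k n = 0 := by
  obtain ⟨m, rfl⟩ := Nat.exists_eq_succ_of_ne_zero hm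
  obtain ⟨n, rfl⟩ := Nat.exists_eq_succ_of_ne_zero hn
  rw [pathProd_succ', pathProd_succ, mul_assoc, ← mul_assoc (ρ _), hρ _ _ (by omega),
    zero_mul, mul_zero]

variable (R) (ρ)

def pathSpan (n : ℕ) : Submodule R A :=
  Submodule.span R {x | ∃ i m, n ≤ m ∧ pathProd ρ i m = x}

variable {R ρ}

lemma pathProd_mem_pathSpan {i m n : ℕ} (h : n ≤ m) : pathProd ρ i m ∈ pathSpan R ρ n :=
  Submodule.subset_span ⟨i, m, h, rfl⟩

lemma pathSpan_antitone : Antitone (pathSpan R ρ) := fun _ _ h =>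
  Submodule.span_mono fun _ ⟨i, m, hm, hx⟩ => ⟨i, m, h.trans hm, hx⟩

lemma pathProd_mul_pathProd_mem (hρ : ∀ a b, b ≠ a + 1 → ρ a * ρ b = 0) (i k : ℕ)
    {m n : ℕ} : pathProd ρ i m * pathProd ρ k n ∈ pathSpan R ρ (m + n) := by
  rcases eq_or_ne m 0 with rfl | hm
  · simpa using pathProd_mem_pathSpan (ρ := ρ) (i := k) (zero_add n).le
  rcases eq_or_ne n 0 with rfl | hn
  · simpa using pathProd_mem_pathSpan (ρ := ρ) (i := i) (add_zero m).le
  by_cases hk : k = i + m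
  · rw [hk, ← pathProd_add]
    exact pathProd_mem_pathSpan le_rfl
  · rw [pathProd_mul_pathProd_of_ne hρ hm hn hk]
    exact zero_mem _

lemma pathSpan_mul_le (hρ : ∀ a b, b ≠ a + 1 → ρ a * ρ b = 0) (m n : ℕ) :
    pathSpan R ρ m * pathSpan R ρ n ≤ pathSpan R ρ (m + n) := by
  rw [pathSpan, pathSpan, Submodule.span_mul_span, Submodule.span_le]
  rintro _ ⟨_, ⟨i, m', hm, rfl⟩, _, ⟨k, n', hn, rfl⟩, rfl⟩
  exact pathSpan_antitone (add_le_add hm hn) (pathProd_mul_pathProd_mem hρ i k)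

lemma list_prod_mem_pathSpan (hρ : ∀ a b, b ≠ a + 1 → ρ a * ρ b = 0) :
    ∀ l : List A, (∀ x ∈ l, x ∈ pathSpan R ρ 1) → l.prod ∈ pathSpan R ρ l.length
  | [], _ => pathProd_mem_pathSpan (i := 0) le_rfl
  | x :: l, hl => by
    rw [List.prod_cons, List.length_cons, add_comm]
    exact pathSpan_mul_le hρ 1 _ <| Submodule.mul_mem_mul (hl x List.mem_cons_self)
      (list_prod_mem_pathSpan hρ l fun y hy => hl y (List.mem_cons_of_mem x hy))

lemma pathSpan_eq_bot {n : ℕ} (h : ∀ i, ∃ k, i ≤ k ∧ k < i + n ∧ ρ k = 0) :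
    pathSpan R ρ n = ⊥ := by
  rw [pathSpan, Submodule.span_eq_bot]
  rintro _ ⟨i, m, hm, rfl⟩
  obtain ⟨k, hik, hkn, hk⟩ := h i
  exact pathProd_eq_zero hk hik (by omega)

lemma pathSpan_one_fg {N : ℕ} (hN : ∀ k, N ≤ k → ρ k = 0) : (pathSpan R ρ 1).FG := by
  refine Submodule.fg_span (((Set.finite_range fun p : Fin N × Fin (N + 1) =>
    pathProd ρ p.1 p.2).insert 0).subset ?_)
  rintro _ ⟨i, m, hm, rfl⟩
  by_cases h : i + m ≤ N
  · exact Or.inr ⟨(⟨i, by omega⟩, ⟨m, by omega⟩), rfl⟩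
  · exact Or.inl (pathProd_eq_zero (hN _ (le_max_right i N)) (le_max_left i N) (by omega))

end PathProd

section Adjoin

variable {R A : Type*} [CommSemiring R] [Semiring A] [Algebra R A] {s : Set A}
  {M : Submodule R A}

lemma Submodule.mul_mem_left_of_adjoin_eq_top (hs : Algebra.adjoin R s = ⊤)
    (hM : ∀ a ∈ s, ∀ y ∈ M, a * y ∈ M) (x : A) {y : A} (hy : y ∈ M) : x * y ∈ M := by
  have hx : x ∈ Algebra.adjoin R s := hs ▸ Algebra.mem_top
  induction hx using Algebra.adjoin_induction generalizing y with
  | mem a ha => exact hM a ha y hy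
  | algebraMap r => simpa only [Algebra.algebraMap_eq_smul_one, smul_mul_assoc, one_mul]
      using M.smul_mem r hy
  | add a b _ _ ha hb => rw [add_mul]; exact add_mem (ha hy) (hb hy)
  | mul a b _ _ ha hb => rw [mul_assoc]; exact ha (hb hy)

lemma Submodule.mul_mem_right_of_adjoin_eq_top (hs : Algebra.adjoin R s = ⊤)
    (hM : ∀ a ∈ s, ∀ y ∈ M, y * a ∈ M) (x : A) {y : A} (hy : y ∈ M) : y * x ∈ M := by
  have hx : x ∈ Algebra.adjoin R s := hs ▸ Algebra.mem_top
  induction hx using Algebra.adjoin_induction generalizing y with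
  | mem a ha => exact hM a ha y hy
  | algebraMap r => simpa only [Algebra.algebraMap_eq_smul_one, mul_smul_comm, mul_one]
      using M.smul_mem r hy
  | add a b _ _ ha hb => rw [mul_add]; exact add_mem (ha hy) (hb hy)
  | mul a b _ _ ha hb => rw [← mul_assoc]; exact hb (ha hy)

end Adjoin

section B2

lemma idem2_mul_self (k : Fin 4) : idem2 k * idem2 k = idem2 k := by
  simpa [idem2] using RingQuot.mkAlgHom_rel (ZMod 2) (Rel2.idem k)

lemma idem2_mul_idem2_of_ne {k l : Fin 4} (h : k ≠ l) : idem2 k * idem2 l = 0 := by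
  simpa [idem2] using RingQuot.mkAlgHom_rel (ZMod 2) (Rel2.orth k l h)

lemma sum_idem2 : ∑ k, idem2 k = 1 := by
  simpa [idem2] using RingQuot.mkAlgHom_rel (ZMod 2) Rel2.sum

lemma idem2_src2_mul_arr2 (m : Fin 7) : idem2 (src2 m) * arr2 m = arr2 m := by
  simpa [idem2, arr2] using RingQuot.mkAlgHom_rel (ZMod 2) (Rel2.source m)

lemma arr2_mul_idem2_tgt2 (m : Fin 7) : arr2 m * idem2 (tgt2 m) = arr2 m := by
  simpa [idem2, arr2] using RingQuot.mkAlgHom_rel (ZMod 2) (Rel2.target m)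

lemma idem2_mul_arr2_of_ne {k : Fin 4} {m : Fin 7} (h : k ≠ src2 m) : idem2 k * arr2 m = 0 := by
  rw [← idem2_src2_mul_arr2 m, ← mul_assoc, idem2_mul_idem2_of_ne h, zero_mul]

lemma arr2_mul_idem2_of_ne {m : Fin 7} {k : Fin 4} (h : tgt2 m ≠ k) : arr2 m * idem2 k = 0 := by
  rw [← arr2_mul_idem2_tgt2 m, mul_assoc, idem2_mul_idem2_of_ne h, mul_zero]

lemma arr2_mul_arr2_of_tgt2_ne {a b : Fin 7} (h : tgt2 a ≠ src2 b) : arr2 a * arr2 b = 0 := by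
  rw [← arr2_mul_idem2_tgt2, ← idem2_src2_mul_arr2 b, mul_assoc, ← mul_assoc (idem2 _),
    idem2_mul_idem2_of_ne h, zero_mul, mul_zero]

lemma arr2_mul_arr2_of_ne {a b : Fin 7} (h : (b : ℕ) ≠ a + 1) : arr2 a * arr2 b = 0 := by
  fin_cases a <;> fin_cases b <;>
    first
      | exact absurd rfl h
      | exact arr2_mul_arr2_of_tgt2_ne (by decide)
      | simpa [arr2] using RingQuot.mkAlgHom_rel (ZMod 2) Rel2.rel14
      | simpa [arr2] using RingQuot.mkAlgHom_rel (ZMod 2) Rel2.rel47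
      | simpa [arr2] using RingQuot.mkAlgHom_rel (ZMod 2) Rel2.rel21
      | simpa [arr2] using RingQuot.mkAlgHom_rel (ZMod 2) Rel2.rel32
      | simpa [arr2] using RingQuot.mkAlgHom_rel (ZMod 2) Rel2.rel65
      | simpa [arr2] using RingQuot.mkAlgHom_rel (ZMod 2) Rel2.rel76

lemma ρ2_eq_zero {k : ℕ} (hk : k = 0 ∨ 8 ≤ k) : ρ2 k = 0 :=
  dif_neg (by omega)

lemma ρ2_succ (m : Fin 7) : ρ2 (m + 1) = arr2 m :=
  dif_pos ⟨by omega, by omega⟩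

lemma ρ2_cases (k : ℕ) : ρ2 k = 0 ∨ ∃ m : Fin 7, k = m + 1 ∧ ρ2 k = arr2 m := by
  by_cases hk : k = 0 ∨ 8 ≤ k
  · exact Or.inl (ρ2_eq_zero hk)
  · exact Or.inr ⟨⟨k - 1, by omega⟩, by simp; omega, dif_pos (by omega)⟩

lemma ρ2_mul_ρ2_of_ne (a b : ℕ) (h : b ≠ a + 1) : ρ2 a * ρ2 b = 0 := by
  rcases ρ2_cases a with ha | ⟨a', rfl, ha⟩
  · rw [ha, zero_mul]
  rcases ρ2_cases b with hb | ⟨b', rfl, hb⟩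
  · rw [hb, mul_zero]
  rw [ha, hb, arr2_mul_arr2_of_ne (by omega)]

lemma idem2_mul_ρ2 (k : Fin 4) (i : ℕ) : idem2 k * ρ2 i = ρ2 i ∨ idem2 k * ρ2 i = 0 := by
  rcases ρ2_cases i with hi | ⟨m, -, hi⟩
  · exact Or.inr (by rw [hi, mul_zero])
  rw [hi]
  by_cases h : k = src2 m
  · exact Or.inl (h ▸ idem2_src2_mul_arr2 m)
  · exact Or.inr (idem2_mul_arr2_of_ne h)

lemma ρ2_mul_idem2 (k : Fin 4) (i : ℕ) : ρ2 i * idem2 k = ρ2 i ∨ ρ2 i * idem2 k = 0 := by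
  rcases ρ2_cases i with hi | ⟨m, -, hi⟩
  · exact Or.inr (by rw [hi, zero_mul])
  rw [hi]
  by_cases h : tgt2 m = k
  · exact Or.inl (h ▸ arr2_mul_idem2_tgt2 m)
  · exact Or.inr (arr2_mul_idem2_of_ne h)

lemma adjoin_idem2_union_arr2 :
    Algebra.adjoin (ZMod 2) (Set.range idem2 ∪ Set.range arr2) = ⊤ := by
  have h := congrArg (Subalgebra.map (RingQuot.mkAlgHom (ZMod 2) Rel2))
    (FreeAlgebra.adjoin_range_ι (ZMod 2) Gen2)
  rw [AlgHom.map_adjoin, Algebra.map_top, (AlgHom.range_eq_top _).mpr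
    (RingQuot.mkAlgHom_surjective _ _), ← Set.range_comp] at h
  convert h using 2
  ext x
  constructor
  · rintro (⟨k, rfl⟩ | ⟨m, rfl⟩)
    exacts [⟨Gen2.e k, rfl⟩, ⟨Gen2.r m, rfl⟩]
  · rintro ⟨g | g, rfl⟩
    exacts [Or.inl ⟨g, rfl⟩, Or.inr ⟨g, rfl⟩]

end B2

section ArrowIdeal

local notation "P" => pathSpan (ZMod 2) ρ2

lemma idem2_mul_mem_pathSpan (k : Fin 4) {n : ℕ} (hn : n ≠ 0) {y : B2} (hy : y ∈ P n) :
    idem2 k * y ∈ P n := by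
  refine (Submodule.span_le (p := (P n).comap (LinearMap.mulLeft (ZMod 2) (idem2 k)))).mpr ?_ hy
  rintro _ ⟨i, m, hm, rfl⟩
  obtain ⟨m, rfl⟩ := Nat.exists_eq_succ_of_ne_zero (by omega : m ≠ 0)
  change idem2 k * pathProd ρ2 i (m + 1) ∈ P n
  rw [pathProd_succ, ← mul_assoc]
  rcases idem2_mul_ρ2 k i with h | h <;> rw [h]
  · exact pathProd_succ ρ2 i m ▸ pathProd_mem_pathSpan hm
  · rw [zero_mul]
    exact zero_mem _

lemma mul_idem2_mem_pathSpan (k : Fin 4) {n : ℕ} (hn : n ≠ 0) {y : B2} (hy : y ∈ P n) :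
    y * idem2 k ∈ P n := by
  refine (Submodule.span_le (p := (P n).comap (LinearMap.mulRight (ZMod 2) (idem2 k)))).mpr ?_ hy
  rintro _ ⟨i, m, hm, rfl⟩
  obtain ⟨m, rfl⟩ := Nat.exists_eq_succ_of_ne_zero (by omega : m ≠ 0)
  change pathProd ρ2 i (m + 1) * idem2 k ∈ P n
  rw [pathProd_succ', mul_assoc]
  rcases ρ2_mul_idem2 k (i + m) with h | h <;> rw [h]
  · exact pathProd_succ' ρ2 i m ▸ pathProd_mem_pathSpan hm
  · rw [mul_zero]
    exact zero_mem _

lemma arr2_mem_pathSpan_one (m : Fin 7) : arr2 m ∈ P 1 :=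
  ρ2_succ m ▸ pathProd_one ρ2 (m + 1) ▸ pathProd_mem_pathSpan le_rfl

lemma pathSpan_ρ2_mul_mem_left {n : ℕ} (hn : n ≠ 0) (x : B2) {y : B2} (hy : y ∈ P n) :
    x * y ∈ P n := by
  refine Submodule.mul_mem_left_of_adjoin_eq_top adjoin_idem2_union_arr2 ?_ x hy
  rintro _ (⟨k, rfl⟩ | ⟨m, rfl⟩) y hy
  · exact idem2_mul_mem_pathSpan k hn hy
  · exact pathSpan_antitone (Nat.le_add_left n 1)
      (pathSpan_mul_le ρ2_mul_ρ2_of_ne 1 n (Submodule.mul_mem_mul (arr2_mem_pathSpan_one m) hy))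

lemma pathSpan_ρ2_mul_mem_right {n : ℕ} (hn : n ≠ 0) {y : B2} (hy : y ∈ P n) (x : B2) :
    y * x ∈ P n := by
  refine Submodule.mul_mem_right_of_adjoin_eq_top adjoin_idem2_union_arr2 ?_ x hy
  rintro _ (⟨k, rfl⟩ | ⟨m, rfl⟩) y hy
  · exact mul_idem2_mem_pathSpan k hn hy
  · exact pathSpan_antitone (Nat.le_add_right n 1)
      (pathSpan_mul_le ρ2_mul_ρ2_of_ne n 1 (Submodule.mul_mem_mul hy (arr2_mem_pathSpan_one m)))

noncomputable def arrowIdeal2 : TwoSidedIdeal B2 :=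
  TwoSidedIdeal.mk' (P 1) (zero_mem _) add_mem neg_mem
    (pathSpan_ρ2_mul_mem_left one_ne_zero _) (pathSpan_ρ2_mul_mem_right one_ne_zero · _)

lemma mem_pathSpan_one_of_mem_span_arr2 {x : B2} (hx : x ∈ TwoSidedIdeal.span (Set.range arr2)) :
    x ∈ P 1 :=
  (TwoSidedIdeal.mem_mk' ..).mp <| TwoSidedIdeal.mem_span_iff.mp hx arrowIdeal2 <| by
    rintro _ ⟨m, rfl⟩
    exact (TwoSidedIdeal.mem_mk' ..).mpr (arr2_mem_pathSpan_one m)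

lemma pathSpan_ρ2_eight_eq_bot : P 8 = ⊥ :=
  pathSpan_eq_bot fun i => if hi : i = 0 then ⟨0, by omega, by omega, ρ2_eq_zero (.inl rfl)⟩
    else ⟨i + 7, by omega, by omega, ρ2_eq_zero (.inr (by omega))⟩

lemma idem2_mul_mem_span_idem2 (k : Fin 4) {y : B2}
    (hy : y ∈ Submodule.span (ZMod 2) (Set.range idem2)) :
    idem2 k * y ∈ Submodule.span (ZMod 2) (Set.range idem2) := by
  refine (Submodule.span_le (p := (Submodule.span (ZMod 2) (Set.range idem2)).comap
    (LinearMap.mulLeft (ZMod 2) (idem2 k)))).mpr ?_ hy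
  rintro _ ⟨l, rfl⟩
  change idem2 k * idem2 l ∈ Submodule.span (ZMod 2) (Set.range idem2)
  by_cases h : k = l
  · rw [← h, idem2_mul_self]
    exact Submodule.subset_span ⟨k, rfl⟩
  · rw [idem2_mul_idem2_of_ne h]
    exact zero_mem _

lemma span_idem2_sup_pathSpan_eq_top : Submodule.span (ZMod 2) (Set.range idem2) ⊔ P 1 = ⊤ := by
  set E := Submodule.span (ZMod 2) (Set.range idem2)
  have hone : (1 : B2) ∈ E ⊔ P 1 :=
    Submodule.mem_sup_left <| sum_idem2 ▸ Submodule.sum_mem _ fun k _ =>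
      Submodule.subset_span ⟨k, rfl⟩
  refine eq_top_iff.mpr fun x _ => mul_one x ▸
    Submodule.mul_mem_left_of_adjoin_eq_top adjoin_idem2_union_arr2 ?_ x hone
  rintro _ (⟨k, rfl⟩ | ⟨m, rfl⟩) _ hy
  all_goals obtain ⟨e, he, p, hp, rfl⟩ := Submodule.mem_sup.mp hy
  · rw [mul_add]
    exact add_mem (Submodule.mem_sup_left (idem2_mul_mem_span_idem2 k he))
      (Submodule.mem_sup_right (pathSpan_ρ2_mul_mem_left one_ne_zero _ hp))
  · rw [mul_add]
    exact Submodule.mem_sup_right (add_mem (pathSpan_ρ2_mul_mem_right one_ne_zero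
      (arr2_mem_pathSpan_one m) e) (pathSpan_ρ2_mul_mem_left one_ne_zero _ hp))

end ArrowIdeal

section Representation

open Matrix

/-- `B(Z_2) i₃ / (paths ending in ρ₅)` has basis `ρ_{k+1} ⋯ ρ₇`, `k < 8` (with `k = 7` giving
`i₃`), vector `k` lying at vertex `vertex8 k`; the arrow `ρ_{k+1}` sends vector `k + 1` to `k`. -/
def vertex8 : Fin 8 → Fin 4 := ![0, 1, 0, 1, 2, 3, 2, 3]

def uniserialGen : Gen2 → Matrix (Fin 8) (Fin 8) (ZMod 2)
  | .e k => diagonal fun a => if vertex8 a = k then 1 else 0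
  | .r m => single m.castSucc m.succ 1

lemma lift_uniserialGen_rel2 ⦃x y : FreeAlgebra (ZMod 2) Gen2⦄ (h : Rel2 x y) :
    lift (ZMod 2) uniserialGen x = lift (ZMod 2) uniserialGen y := by
  induction h <;> simp only [map_mul, map_sum, map_one, map_zero, lift_ι_apply, uniserialGen]
  case idem k => revert k; decide
  case orth k l h => revert k l h; decide
  case source m => revert m; decide
  case target m => revert m; decide
  all_goals decide

noncomputable def uniserialRep : B2 →ₐ[ZMod 2] Matrix (Fin 8) (Fin 8) (ZMod 2) :=
  RingQuot.liftAlgHom (ZMod 2) ⟨lift (ZMod 2) uniserialGen, lift_uniserialGen_rel2⟩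

lemma uniserialRep_arr2 (m : Fin 7) : uniserialRep (arr2 m) = single m.castSucc m.succ 1 := by
  rw [arr2, uniserialRep, RingQuot.liftAlgHom_mkAlgHom_apply, lift_ι_apply]
  rfl

lemma prod_ofFn_arr2_ne_zero : (List.ofFn arr2).prod ≠ 0 := by
  intro h
  have h' := congrArg uniserialRep h
  rw [map_list_prod, List.map_ofFn, map_zero] at h'
  simp only [Function.comp_def, uniserialRep_arr2] at h'
  revert h'
  decide

end Representation

/-- the two-sided ideal R of B(Z_2) generated by the arrows satisfies
R^8 = 0 (every product of 8 elements of R vanishes) but R^7 ≠ 0; in particular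
B(Z_2) is finite dimensional with arrow ideal nilpotent of index exactly 8. -/
theorem stmt_4 :
    FiniteDimensional (ZMod 2) B2 ∧
    (∀ f : Fin 8 → B2, (∀ t, f t ∈ TwoSidedIdeal.span (Set.range arr2)) →
      (List.ofFn f).prod = 0) ∧
    (∃ f : Fin 7 → B2, (∀ t, f t ∈ TwoSidedIdeal.span (Set.range arr2)) ∧
      (List.ofFn f).prod ≠ 0) := by
  refine ⟨?_, fun f hf => ?_, arr2, fun t => TwoSidedIdeal.subset_span ⟨t, rfl⟩,
    prod_ofFn_arr2_ne_zero⟩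
  · refine Module.finite_def.mpr (span_idem2_sup_pathSpan_eq_top ▸ ?_)
    exact (Submodule.fg_span (Set.finite_range idem2)).sup
      (pathSpan_one_fg fun k hk => ρ2_eq_zero (.inr hk))
  · have h := list_prod_mem_pathSpan (R := ZMod 2) ρ2_mul_ρ2_of_ne (List.ofFn f)
      (List.forall_mem_ofFn_iff.mpr fun t => mem_pathSpan_one_of_mem_span_arr2 (hf t))
    rwa [List.length_ofFn, pathSpan_ρ2_eight_eq_bot, Submodule.mem_bot] at h
end

section
/- The zeroth Hochschild homology HH_0(B(Z_2)) = B(Z_2)/[B(Z_2), B(Z_2)] is 4-dimensional over F_2, spanned by the classes of the four idempotents i_0, i_1, i_2, i_3. In particular, the classes of the cyclic paths ρ_1 ρ_2, ρ_2 ρ_3, ρ_5 ρ_6, ρ_6 ρ_7 all vanish in HH_0. -/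
/-!
Since a product of two arrows ρ_m ρ_i vanishes unless i = m + 1, the F₂-span of the
idempotents and the paths ρ_i ρ_{i+1} ⋯ ρ_j is stable under left multiplication by the
generators, hence is all of B(Z₂). Every such path is a commutator: an arrow ρ from i_s to
i_t ≠ i_s is i_s ρ - ρ i_s, and a longer path ρ_i p equals ρ_i p - p ρ_i because p ends in
some ρ_j with ρ_j ρ_i = 0. So the idempotents span HH₀. They are independent there: the
algebra map to F₂⁴ that sends i_k to the k-th unit vector and kills the arrows has commutative
target, so it factors through HH₀.
-/

open FreeAlgebra

/-- The F_2-span of all commutators in B(Z_2). -/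
noncomputable def commSpan2 : Submodule (ZMod 2) B2 :=
  Submodule.span (ZMod 2) {x : B2 | ∃ a b : B2, x = a * b - b * a}

theorem Submodule.eq_top_of_one_mem_of_forall_mul_mem {R A : Type*} [CommSemiring R]
    [Semiring A] [Algebra R A] {s : Set A} (hs : Algebra.adjoin R s = ⊤) (M : Submodule R A)
    (one_mem : (1 : A) ∈ M) (mul_mem : ∀ a ∈ s, ∀ m ∈ M, a * m ∈ M) : M = ⊤ := by
  suffices h : ∀ x ∈ Algebra.adjoin R s, ∀ m ∈ M, x * m ∈ M from
    eq_top_iff.mpr fun x _ => mul_one x ▸ h x (hs ▸ Algebra.mem_top) 1 one_mem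
  intro x hx
  induction hx using Algebra.adjoin_induction with
  | mem a ha => exact mul_mem a ha
  | algebraMap r => exact fun m hm => (Algebra.smul_def r m).symm ▸ M.smul_mem r hm
  | add x y _ _ hx hy => exact fun m hm => (add_mul x y m).symm ▸ M.add_mem (hx m hm) (hy m hm)
  | mul x y _ _ hx hy => exact fun m hm => (mul_assoc x y m).symm ▸ hx _ (hy m hm)

theorem RingQuot.adjoin_range_mkAlgHom_ι {R X : Type*} [CommSemiring R]
    (r : FreeAlgebra R X → FreeAlgebra R X → Prop) :
    Algebra.adjoin R (Set.range (mkAlgHom R r ∘ FreeAlgebra.ι R)) = ⊤ := by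
  rw [Set.range_comp, Algebra.adjoin_image, FreeAlgebra.adjoin_range_ι, Algebra.map_top,
    AlgHom.range_eq_top]
  exact mkAlgHom_surjective R r

theorem AlgHom.span_commutators_le_ker {R A C : Type*} [CommSemiring R] [Ring A] [CommRing C]
    [Algebra R A] [Algebra R C] (f : A →ₐ[R] C) :
    Submodule.span R {x : A | ∃ a b, x = a * b - b * a} ≤ LinearMap.ker f.toLinearMap := by
  refine Submodule.span_le.mpr ?_
  rintro _ ⟨a, b, rfl⟩
  simp [mul_comm]

namespace B2

theorem idem2_mul_self (k : Fin 4) : idem2 k * idem2 k = idem2 k := by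
  simpa [idem2] using RingQuot.mkAlgHom_rel (ZMod 2) (Rel2.idem k)

theorem idem2_mul_idem2_of_ne {k l : Fin 4} (h : k ≠ l) : idem2 k * idem2 l = 0 := by
  simpa [idem2] using RingQuot.mkAlgHom_rel (ZMod 2) (Rel2.orth k l h)

theorem sum_idem2 : ∑ k, idem2 k = 1 := by
  simpa [idem2] using RingQuot.mkAlgHom_rel (ZMod 2) Rel2.sum

theorem idem2_src_mul_arr2 (m : Fin 7) : idem2 (src2 m) * arr2 m = arr2 m := by
  simpa [idem2, arr2] using RingQuot.mkAlgHom_rel (ZMod 2) (Rel2.source m)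

theorem arr2_mul_idem2_tgt (m : Fin 7) : arr2 m * idem2 (tgt2 m) = arr2 m := by
  simpa [idem2, arr2] using RingQuot.mkAlgHom_rel (ZMod 2) (Rel2.target m)

theorem src2_ne_tgt2 (m : Fin 7) : src2 m ≠ tgt2 m := by
  fin_cases m <;> decide

theorem idem2_mul_arr2 (k : Fin 4) (m : Fin 7) :
    idem2 k * arr2 m = arr2 m ∨ idem2 k * arr2 m = 0 := by
  by_cases h : k = src2 m
  · exact .inl (h ▸ idem2_src_mul_arr2 m)
  · rw [← idem2_src_mul_arr2 m, ← mul_assoc, idem2_mul_idem2_of_ne h, zero_mul]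
    exact .inr rfl

theorem arr2_mul_idem2 (m : Fin 7) (k : Fin 4) :
    arr2 m * idem2 k = arr2 m ∨ arr2 m * idem2 k = 0 := by
  by_cases h : k = tgt2 m
  · exact .inl (h ▸ arr2_mul_idem2_tgt m)
  · rw [← arr2_mul_idem2_tgt m, mul_assoc, idem2_mul_idem2_of_ne (Ne.symm h), mul_zero]
    exact .inr rfl

theorem arr2_mul_arr2_of_tgt_ne_src {m i : Fin 7} (h : tgt2 m ≠ src2 i) :
    arr2 m * arr2 i = 0 := by
  rw [← arr2_mul_idem2_tgt m, ← idem2_src_mul_arr2 i, mul_assoc, ← mul_assoc (idem2 _),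
    idem2_mul_idem2_of_ne h, zero_mul, mul_zero]

theorem arr2_mul_arr2_of_rel {m i : Fin 7}
    (h : Rel2 (ι (ZMod 2) (Gen2.r m) * ι (ZMod 2) (Gen2.r i)) 0) :
    arr2 m * arr2 i = 0 := by
  simpa [arr2] using RingQuot.mkAlgHom_rel (ZMod 2) h

theorem arr2_mul_arr2_eq_zero {m i : Fin 7} (h : (i : ℕ) ≠ m + 1) : arr2 m * arr2 i = 0 := by
  fin_cases m <;> fin_cases i <;>
    first
      | exact absurd rfl h
      | exact arr2_mul_arr2_of_tgt_ne_src (by decide)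
      | exact arr2_mul_arr2_of_rel (by constructor)

theorem ρ2_succ (m : Fin 7) : ρ2 (m + 1) = arr2 m := by
  simp [ρ2]

theorem exists_eq_succ_or_ρ2_eq_zero (n : ℕ) : (∃ m : Fin 7, n = m + 1) ∨ ρ2 n = 0 := by
  by_cases h : 1 ≤ n ∧ n ≤ 7
  · exact .inl ⟨⟨n - 1, by omega⟩, by simp; omega⟩
  · exact .inr (dif_neg h)

theorem ρ2_mul_ρ2_eq_zero {m i : ℕ} (h : i ≠ m + 1) : ρ2 m * ρ2 i = 0 := by
  rcases exists_eq_succ_or_ρ2_eq_zero m with ⟨a, rfl⟩ | hm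
  · rcases exists_eq_succ_or_ρ2_eq_zero i with ⟨b, rfl⟩ | hi
    · rw [ρ2_succ, ρ2_succ]
      exact arr2_mul_arr2_eq_zero (by omega)
    · rw [hi, mul_zero]
  · rw [hm, zero_mul]

theorem idem2_mul_ρ2 (k : Fin 4) (n : ℕ) : idem2 k * ρ2 n = ρ2 n ∨ idem2 k * ρ2 n = 0 := by
  rcases exists_eq_succ_or_ρ2_eq_zero n with ⟨m, rfl⟩ | h
  · rw [ρ2_succ]
    exact idem2_mul_arr2 k m
  · simp [h]

theorem ρ2_mul_idem2 (n : ℕ) (k : Fin 4) : ρ2 n * idem2 k = ρ2 n ∨ ρ2 n * idem2 k = 0 := by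
  rcases exists_eq_succ_or_ρ2_eq_zero n with ⟨m, rfl⟩ | h
  · rw [ρ2_succ]
    exact arr2_mul_idem2 m k
  · simp [h]

theorem chord2_self (i : ℕ) : chord2 i i = ρ2 i := by
  simp [chord2]

theorem chord2_eq_ρ2_mul {i j : ℕ} (h : i ≤ j) : chord2 i j = ρ2 i * chord2 (i + 1) j := by
  rw [chord2, chord2, show j + 1 - i = j - i + 1 by omega, show j + 1 - (i + 1) = j - i by omega,
    List.range'_succ, List.map_cons, List.prod_cons]

theorem chord2_succ_right {i j : ℕ} (h : i ≤ j + 1) :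
    chord2 i (j + 1) = chord2 i j * ρ2 (j + 1) := by
  rw [chord2, chord2, show j + 1 + 1 - i = j + 1 - i + 1 by omega, List.range'_1_concat,
    List.map_append, List.prod_append, show i + (j + 1 - i) = j + 1 by omega]
  simp

theorem commutator_mem_commSpan2 (a b : B2) : a * b - b * a ∈ commSpan2 :=
  Submodule.subset_span ⟨a, b, rfl⟩

theorem ρ2_mem_commSpan2 (n : ℕ) : ρ2 n ∈ commSpan2 := by
  rcases exists_eq_succ_or_ρ2_eq_zero n with ⟨m, rfl⟩ | h
  · have hsrc : arr2 m * idem2 (src2 m) = 0 := by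
      rw [← arr2_mul_idem2_tgt m, mul_assoc, idem2_mul_idem2_of_ne (src2_ne_tgt2 m).symm,
        mul_zero]
    have hcomm : arr2 m = idem2 (src2 m) * arr2 m - arr2 m * idem2 (src2 m) := by
      rw [idem2_src_mul_arr2, hsrc, sub_zero]
    rw [ρ2_succ, hcomm]
    exact commutator_mem_commSpan2 _ _
  · exact h ▸ commSpan2.zero_mem

theorem chord2_mem_commSpan2 {i j : ℕ} (h : i ≤ j) : chord2 i j ∈ commSpan2 := by
  rcases h.eq_or_lt with rfl | hlt
  · exact chord2_self i ▸ ρ2_mem_commSpan2 i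
  obtain ⟨k, rfl⟩ := Nat.exists_eq_add_of_lt hlt
  have hrev : chord2 (i + 1) (i + k + 1) * ρ2 i = 0 := by
    rw [chord2_succ_right (by omega), mul_assoc, ρ2_mul_ρ2_eq_zero (by omega), mul_zero]
  have hcomm : chord2 i (i + k + 1) =
      ρ2 i * chord2 (i + 1) (i + k + 1) - chord2 (i + 1) (i + k + 1) * ρ2 i := by
    rw [hrev, sub_zero, chord2_eq_ρ2_mul (by omega)]
  rw [hcomm]
  exact commutator_mem_commSpan2 _ _

def pathSpan : Submodule (ZMod 2) B2 :=
  Submodule.span (ZMod 2) (Set.range idem2 ∪ {x | ∃ i j, i ≤ j ∧ chord2 i j = x})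

theorem idem2_mem_pathSpan (k : Fin 4) : idem2 k ∈ pathSpan :=
  Submodule.subset_span (.inl ⟨k, rfl⟩)

theorem chord2_mem_pathSpan {i j : ℕ} (h : i ≤ j) : chord2 i j ∈ pathSpan :=
  Submodule.subset_span (.inr ⟨i, j, h, rfl⟩)

theorem ρ2_mem_pathSpan (n : ℕ) : ρ2 n ∈ pathSpan :=
  chord2_self n ▸ chord2_mem_pathSpan le_rfl

theorem idem2_mul_mem_pathSpan (k : Fin 4) {x : B2} (hx : x ∈ pathSpan) :
    idem2 k * x ∈ pathSpan := by
  refine (Submodule.span_le (p := pathSpan.comap (LinearMap.mulLeft (ZMod 2) (idem2 k)))).mpr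
    ?_ hx
  rintro _ (⟨l, rfl⟩ | ⟨i, j, hij, rfl⟩)
  · show idem2 k * idem2 l ∈ pathSpan
    by_cases hkl : k = l
    · rw [hkl, idem2_mul_self]
      exact idem2_mem_pathSpan l
    · rw [idem2_mul_idem2_of_ne hkl]
      exact pathSpan.zero_mem
  · show idem2 k * chord2 i j ∈ pathSpan
    rw [chord2_eq_ρ2_mul hij, ← mul_assoc]
    rcases idem2_mul_ρ2 k i with h | h <;> rw [h]
    · rw [← chord2_eq_ρ2_mul hij]
      exact chord2_mem_pathSpan hij
    · rw [zero_mul]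
      exact pathSpan.zero_mem

theorem ρ2_mul_mem_pathSpan (n : ℕ) {x : B2} (hx : x ∈ pathSpan) :
    ρ2 n * x ∈ pathSpan := by
  refine (Submodule.span_le (p := pathSpan.comap (LinearMap.mulLeft (ZMod 2) (ρ2 n)))).mpr
    ?_ hx
  rintro _ (⟨k, rfl⟩ | ⟨i, j, hij, rfl⟩)
  · show ρ2 n * idem2 k ∈ pathSpan
    rcases ρ2_mul_idem2 n k with h | h <;> rw [h]
    · exact ρ2_mem_pathSpan n
    · exact pathSpan.zero_mem
  · show ρ2 n * chord2 i j ∈ pathSpan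
    by_cases hi : i = n + 1
    · subst hi
      rw [← chord2_eq_ρ2_mul (by omega)]
      exact chord2_mem_pathSpan (by omega)
    · rw [chord2_eq_ρ2_mul hij, ← mul_assoc, ρ2_mul_ρ2_eq_zero hi, zero_mul]
      exact pathSpan.zero_mem

theorem pathSpan_eq_top : pathSpan = ⊤ := by
  refine Submodule.eq_top_of_one_mem_of_forall_mul_mem
    (RingQuot.adjoin_range_mkAlgHom_ι Rel2) pathSpan ?_ ?_
  · exact sum_idem2 ▸ Submodule.sum_mem _ fun k _ => idem2_mem_pathSpan k
  · rintro _ ⟨g | m, rfl⟩ x hx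
    · exact idem2_mul_mem_pathSpan g hx
    · rw [Function.comp_apply, ← arr2, ← ρ2_succ]
      exact ρ2_mul_mem_pathSpan _ hx

theorem span_idem2_sup_commSpan2 :
    Submodule.span (ZMod 2) (Set.range idem2) ⊔ commSpan2 = ⊤ := by
  rw [eq_top_iff, ← pathSpan_eq_top, pathSpan, Submodule.span_le]
  rintro _ (⟨k, rfl⟩ | ⟨i, j, hij, rfl⟩)
  · exact Submodule.mem_sup_left (Submodule.subset_span ⟨k, rfl⟩)
  · exact Submodule.mem_sup_right (chord2_mem_commSpan2 hij)

def vertexWeight : Gen2 → (Fin 4 → ZMod 2)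
  | .e k => Pi.single k 1
  | .r _ => 0

theorem lift_vertexWeight_rel ⦃x y : FreeAlgebra (ZMod 2) Gen2⦄ (h : Rel2 x y) :
    FreeAlgebra.lift (ZMod 2) vertexWeight x = FreeAlgebra.lift (ZMod 2) vertexWeight y := by
  induction h <;> ext j <;> simp [vertexWeight, Pi.single_apply]
  case orth k l hkl => exact fun hl hk => hkl (hk ▸ hl)

def toVertices : B2 →ₐ[ZMod 2] (Fin 4 → ZMod 2) :=
  RingQuot.liftAlgHom (ZMod 2) ⟨FreeAlgebra.lift (ZMod 2) vertexWeight, lift_vertexWeight_rel⟩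

theorem toVertices_idem2 (k : Fin 4) : toVertices (idem2 k) = Pi.single k 1 := by
  simp [toVertices, idem2, vertexWeight]

theorem linearIndependent_mkQ_idem2 :
    LinearIndependent (ZMod 2) (fun k : Fin 4 => commSpan2.mkQ (idem2 k)) := by
  let f := commSpan2.liftQ toVertices.toLinearMap (AlgHom.span_commutators_le_ker _)
  have hbasis : f ∘ (fun k => commSpan2.mkQ (idem2 k)) = Pi.basisFun (ZMod 2) (Fin 4) :=
    funext fun k => by rw [Pi.basisFun_apply]; exact toVertices_idem2 k
  exact .of_comp f (hbasis ▸ (Pi.basisFun (ZMod 2) (Fin 4)).linearIndependent)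

theorem span_mkQ_idem2 :
    Submodule.span (ZMod 2) (Set.range fun k : Fin 4 => commSpan2.mkQ (idem2 k)) = ⊤ := by
  rw [Set.range_comp', ← Submodule.map_span, Submodule.map_mkQ_eq_top, sup_comm,
    span_idem2_sup_commSpan2]

theorem mkQ_ρ2_mul_ρ2_succ (m : ℕ) : commSpan2.mkQ (ρ2 m * ρ2 (m + 1)) = 0 := by
  rw [Submodule.mkQ_apply, Submodule.Quotient.mk_eq_zero, ← chord2_self (m + 1),
    ← chord2_eq_ρ2_mul m.le_succ]
  exact chord2_mem_commSpan2 m.le_succ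

end B2

/-- HH_0(B(Z_2)) = B(Z_2)/[B(Z_2),B(Z_2)] is 4-dimensional over F_2,
spanned by the classes of the four idempotents; the classes of the cyclic paths
rho_1 rho_2, rho_2 rho_3, rho_5 rho_6, rho_6 rho_7 vanish. -/
theorem stmt_6 :
    Module.finrank (ZMod 2) (B2 ⧸ commSpan2) = 4 ∧
    Submodule.span (ZMod 2) (Set.range (fun k : Fin 4 => commSpan2.mkQ (idem2 k))) = ⊤ ∧
    commSpan2.mkQ (ρ2 1 * ρ2 2) = 0 ∧ commSpan2.mkQ (ρ2 2 * ρ2 3) = 0 ∧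
    commSpan2.mkQ (ρ2 5 * ρ2 6) = 0 ∧ commSpan2.mkQ (ρ2 6 * ρ2 7) = 0 := by
  refine ⟨?_, B2.span_mkQ_idem2, B2.mkQ_ρ2_mul_ρ2_succ 1, B2.mkQ_ρ2_mul_ρ2_succ 2,
    B2.mkQ_ρ2_mul_ρ2_succ 5, B2.mkQ_ρ2_mul_ρ2_succ 6⟩
  rw [Module.finrank_eq_card_basis (.mk B2.linearIndependent_mkQ_idem2 B2.span_mkQ_idem2.ge),
    Fintype.card_fin]
end
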